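/- arXiv:1611.08073 — 4 statements merged into one kernel-verified Lean document; each statement's English description precedes it below -/
import Mathlib

section
/- Let t ∈ 𝕋 and z ∈ ℂ be such that H(t) − z·1 is invertible as a bounded operator on ℓ²(ℤ;V). Then for every η ∈ 𝕋 the endomorphism H(η,t) − z·1_V of V is invertible. Equivalently, for every η ∈ 𝕋 and t ∈ 𝕋 the spectrum of H(η,t) in End_ℂ(V) is contained in the spectrum of the bounded operator H(t). -/
/-!
Suppose `H(η,t) v = z v` with `v ≠ 0`. The plane wave `n ↦ η⁻ⁿ v` is a formal eigenvector of
`H(t)` for `z`; its truncation `φ_N` to the window `[0, N)` has norm `√N ‖v‖`, and the eigenvalue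
equation cancels everything in `(H(t) - z) φ_N` except, for each `j`, the `A_j`-terms on the
symmetric difference of the window and its translate by `j`. These have norm at most
`2 √(min |j| N) ‖A_j‖ ‖v‖`, so by dominated convergence `‖(H(t) - z) φ_N‖ / ‖φ_N‖ → 0` and
`H(t) - z` has no bounded inverse. In finite dimension every point of the spectrum of the symbol
is an eigenvalue, which gives the inclusion of spectra; the invertibility statement is its
contrapositive.
-/

noncomputable section

local notation "𝕋" => Metric.sphere (0 : ℂ) 1

/-- `ℓ²(ℤ; V)`, the Hilbert space of square-summable `V`-valued sequences. -/
abbrev L2 (V : Type) [NormedAddCommGroup V] : Type := lp (fun _ : ℤ => V) 2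

open Filter Topology Finset

namespace lp

section
variable {α : Type*} {E : α → Type*} [∀ i, NormedAddCommGroup (E i)] {p : ENNReal} [Fact (1 ≤ p)]
  {κ : Type*}

theorem hasSum_apply {f : κ → lp E p} {x : lp E p} (hf : HasSum f x) (i : α) :
    HasSum (fun j => f j i) (x i) :=
  Pi.hasSum.mp (hf.map (coeFnAddMonoidHom E p) uniformContinuous_coe.continuous) i

theorem hasSum_of_tsum_apply {f : κ → lp E p} {x : lp E p} (hf : Summable f)
    (h : ∀ i, ∑' j, f j i = x i) : HasSum f x := by
  convert hf.hasSum
  ext i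
  rw [← h i, (hasSum_apply hf.hasSum i).tsum_eq]
end

variable {ι κ E : Type*} [DecidableEq ι] [NormedAddCommGroup E]

def indicator (s : Finset ι) (g : ι → E) : lp (fun _ : ι => E) 2 :=
  ∑ i ∈ s, lp.single 2 i (g i)

theorem indicator_apply (s : Finset ι) (g : ι → E) (i : ι) :
    indicator s g i = if i ∈ s then g i else 0 := by
  simp only [indicator, coeFn_sum, Finset.sum_apply, lp.coeFn_single, Finset.sum_pi_single]

theorem norm_indicator_sq (s : Finset ι) (g : ι → E) :
    ‖indicator s g‖ ^ 2 = ∑ i ∈ s, ‖g i‖ ^ 2 := by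
  simpa [indicator] using lp.norm_sum_single (p := 2) (by norm_num) g s

theorem norm_indicator_le {s : Finset ι} {g : ι → E} {r : ℝ} (h : ∀ i ∈ s, ‖g i‖ ≤ r) :
    ‖indicator s g‖ ≤ √(#s) * r := by
  rcases s.eq_empty_or_nonempty with rfl | ⟨i, hi⟩
  · simp [indicator]
  have hr : 0 ≤ r := (norm_nonneg _).trans (h i hi)
  rw [← Real.sqrt_sq (norm_nonneg _), norm_indicator_sq, ← Real.sqrt_sq hr,
    ← Real.sqrt_mul (Nat.cast_nonneg _)]
  gcongr
  calc ∑ i ∈ s, ‖g i‖ ^ 2 ≤ ∑ _i ∈ s, r ^ 2 := by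
        gcongr with i hi; exact h i hi
    _ = #s * r ^ 2 := by simp

theorem norm_indicator_of_norm_eq {s : Finset ι} {g : ι → E} {r : ℝ} (hr : 0 ≤ r)
    (h : ∀ i ∈ s, ‖g i‖ = r) : ‖indicator s g‖ = √(#s) * r := by
  rw [← Real.sqrt_sq (norm_nonneg _), norm_indicator_sq, sum_congr rfl fun i hi => by rw [h i hi],
    sum_const, nsmul_eq_mul, Real.sqrt_mul (Nat.cast_nonneg _), Real.sqrt_sq hr]

theorem indicator_sub_indicator (s t : Finset ι) (g : ι → E) :
    indicator t g - indicator s g = indicator (t \ s) g - indicator (s \ t) g := by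
  ext i
  simp only [coeFn_sub, Pi.sub_apply, indicator_apply]
  split_ifs <;> simp_all

theorem summable_indicator [CompleteSpace E] {s : κ → Finset ι} {g : κ → ι → E} {b : κ → ℝ}
    {N : ℕ} (hb : Summable b) (hs : ∀ j, #(s j) ≤ N) (hg : ∀ j, ∀ i ∈ s j, ‖g j i‖ ≤ b j) :
    Summable fun j => indicator (s j) (g j) := by
  refine .of_norm_bounded (hb.abs.mul_left √N) fun j => (norm_indicator_le (hg j)).trans ?_
  calc √(#(s j)) * b j ≤ √(#(s j)) * |b j| := by gcongr; exact le_abs_self _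
    _ ≤ √N * |b j| := by gcongr; exact_mod_cast hs j

end lp

theorem card_Ico_sdiff_Ico_le (a b : ℤ) (N : ℕ) :
    #(Ico a (a + N) \ Ico b (b + N)) ≤ min (a - b).natAbs N := by
  rw [card_sdiff, Ico_inter_Ico, Int.card_Ico, Int.card_Ico]
  omega

theorem tendsto_tsum_mul_sqrt_min_div_sqrt {ι : Type*} {a : ι → ℝ} (ha : Summable a)
    (ha0 : ∀ j, 0 ≤ a j) (m : ι → ℕ) :
    Tendsto (fun N : ℕ => (∑' j, a j * √(min (m j : ℝ) N)) / √N) atTop (𝓝 0) := by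
  simp_rw [← tsum_div_const, mul_div_assoc]
  have hsqrt : Tendsto (fun N : ℕ => √(N : ℝ)) atTop atTop :=
    Real.tendsto_sqrt_atTop.comp tendsto_natCast_atTop_atTop
  have hratio_le_one : ∀ (j : ι) (N : ℕ), √(min (m j : ℝ) N) / √N ≤ 1 := fun j N =>
    div_le_one_of_le₀ (Real.sqrt_le_sqrt (min_le_right _ _)) (Real.sqrt_nonneg _)
  have hratio_tendsto (j : ι) : Tendsto (fun N : ℕ => √(min (m j : ℝ) N) / √N) atTop (𝓝 0) :=
    have hbound : Tendsto (fun N : ℕ => √(m j : ℝ) / √N) atTop (𝓝 0) :=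
      tendsto_const_nhds.div_atTop hsqrt
    squeeze_zero (fun N => by positivity) (fun N => by gcongr; exact min_le_left _ _) hbound
  simpa using tendsto_tsum_of_dominated_convergence (𝓕 := atTop)
    (f := fun (N : ℕ) j => a j * (√(min (m j : ℝ) N) / √N)) (g := fun _ => 0) ha
    (fun j => by simpa using (hratio_tendsto j).const_mul (a j))
    (.of_forall fun N j => by
      rw [norm_mul, Real.norm_of_nonneg (ha0 j), Real.norm_of_nonneg (by positivity)]
      exact mul_le_of_le_one_right (ha0 j) (hratio_le_one j N))

theorem not_isUnit_of_norm_apply_le {𝕜 E α : Type*} [NontriviallyNormedField 𝕜]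
    [NormedAddCommGroup E] [NormedSpace 𝕜 E] {l : Filter α} [l.NeBot] {T : E →L[𝕜] E}
    {x : α → E} {δ : α → ℝ} (hδ : Tendsto δ l (𝓝 0))
    (hx : ∀ᶠ N in l, x N ≠ 0 ∧ ‖T (x N)‖ ≤ δ N * ‖x N‖) : ¬IsUnit T := by
  rintro ⟨u, rfl⟩
  set C := ‖(↑u⁻¹ : E →L[𝕜] E)‖
  have hsmall : ∀ᶠ N in l, C * δ N < 1 :=
    (hδ.const_mul C).eventually (gt_mem_nhds (by simp))
  obtain ⟨N, ⟨hxN, hTx⟩, hCδ⟩ := (hx.and hsmall).exists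
  have hinv : (↑u⁻¹ : E →L[𝕜] E) ((u : E →L[𝕜] E) (x N)) = x N := by
    rw [← mul_apply_eq_comp, Units.inv_mul, one_apply_eq_self]
  have : ‖x N‖ < ‖x N‖ := calc
    ‖x N‖ ≤ C * ‖(u : E →L[𝕜] E) (x N)‖ := by
      simpa [hinv] using (↑u⁻¹ : E →L[𝕜] E).le_opNorm ((u : E →L[𝕜] E) (x N))
    _ ≤ C * (δ N * ‖x N‖) := by gcongr
    _ = C * δ N * ‖x N‖ := (mul_assoc _ _ _).symm
    _ < ‖x N‖ := mul_lt_of_lt_one_left (norm_pos_iff.mpr hxN) hCδ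
  exact this.false

theorem mem_spectrum_iff_not_isUnit_sub_smul_one {R B : Type*} [CommSemiring R] [Ring B]
    [Algebra R B] {r : R} {b : B} : r ∈ spectrum R b ↔ ¬IsUnit (b - r • 1) := by
  rw [spectrum.mem_iff, IsUnit.sub_iff, Algebra.algebraMap_eq_smul_one]

theorem norm_zpow_smul_of_norm_eq_one {𝕜 E : Type*} [NormedDivisionRing 𝕜]
    [SeminormedAddCommGroup E] [Module 𝕜 E] [NormSMulClass 𝕜 E] {η : 𝕜} (hη : ‖η‖ = 1) (k : ℤ) (x : E) :
    ‖η ^ k • x‖ = ‖x‖ := by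
  rw [norm_smul, norm_zpow, hη, one_zpow, one_mul]

section Convolution

variable {V : Type} [NormedAddCommGroup V] [NormedSpace ℂ V]

def truncatedPlaneWave (η : ℂ) (v : V) (N : ℕ) : L2 V :=
  lp.indicator (Ico 0 (N : ℤ)) fun n => η ^ (-n) • v

theorem norm_truncatedPlaneWave {η : ℂ} (hη : ‖η‖ = 1) (v : V) (N : ℕ) :
    ‖truncatedPlaneWave η v N‖ = √N * ‖v‖ := by
  rw [truncatedPlaneWave, lp.norm_indicator_of_norm_eq (norm_nonneg v)
    fun n _ => norm_zpow_smul_of_norm_eq_one hη _ v]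
  simp

theorem norm_zpow_smul_apply_le {η : ℂ} (hη : ‖η‖ = 1) (k : ℤ) (B : V →L[ℂ] V) (x : V) :
    ‖η ^ k • B x‖ ≤ ‖B‖ * ‖x‖ :=
  (norm_zpow_smul_of_norm_eq_one hη k _).trans_le (B.le_opNorm x)

variable [CompleteSpace V] {A : ℤ → V →L[ℂ] V} {T : L2 V →L[ℂ] L2 V} {η z : ℂ} {v : V}

theorem hasSum_apply_truncatedPlaneWave (hA : Summable (‖A ·‖))
    (hT : ∀ φ n, T φ n = ∑' j, A j (φ (n - j))) (hη : ‖η‖ = 1) (N : ℕ) :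
    HasSum (fun j : ℤ => lp.indicator (Ico j (j + N)) fun n => η ^ (j - n) • A j v)
      (T (truncatedPlaneWave η v N)) := by
  refine lp.hasSum_of_tsum_apply (lp.summable_indicator (N := N) (hA.mul_right ‖v‖)
    (fun j => by simp) fun j n _ => ?_) fun n => ?_
  · exact norm_zpow_smul_apply_le hη _ (A j) v
  · rw [hT]
    congr 1 with j
    have hmem : n ∈ Ico j (j + N) ↔ n - j ∈ Ico 0 (N : ℤ) := by simp only [mem_Ico]; omega
    simp only [truncatedPlaneWave, lp.indicator_apply, hmem]
    split_ifs <;> simp [neg_sub]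

theorem hasSum_smul_truncatedPlaneWave (hA : Summable (‖A ·‖)) (hη : ‖η‖ = 1)
    (hv : ∑' j, η ^ j • A j v = z • v) (N : ℕ) :
    HasSum (fun j : ℤ => lp.indicator (Ico 0 (N : ℤ)) fun n => η ^ (j - n) • A j v)
      (z • truncatedPlaneWave η v N) := by
  have hη0 : η ≠ 0 := by rintro rfl; simp at hη
  refine lp.hasSum_of_tsum_apply (lp.summable_indicator (N := N) (hA.mul_right ‖v‖)
    (fun j => by simp) fun j n _ => ?_) fun n => ?_
  · exact norm_zpow_smul_apply_le hη _ (A j) v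
  · simp only [truncatedPlaneWave, lp.coeFn_smul, Pi.smul_apply, lp.indicator_apply]
    split_ifs
    · simp_rw [sub_eq_neg_add, zpow_add₀ hη0, mul_smul, tsum_const_smul'', hv, smul_comm z]
    · simp

theorem norm_sub_smul_one_apply_truncatedPlaneWave_le (hA : Summable (‖A ·‖))
    (hT : ∀ φ n, T φ n = ∑' j, A j (φ (n - j))) (hη : ‖η‖ = 1)
    (hv : ∑' j, η ^ j • A j v = z • v) (N : ℕ) :
    ‖(T - z • 1) (truncatedPlaneWave η v N)‖ ≤
      2 * ‖v‖ * ∑' j : ℤ, ‖A j‖ * √(min (j.natAbs : ℝ) N) := by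
  have hsum := (hasSum_apply_truncatedPlaneWave (v := v) hA hT hη N).sub
    (hasSum_smul_truncatedPlaneWave hA hη hv N)
  have hbound : Summable fun j : ℤ => ‖A j‖ * √(min (j.natAbs : ℝ) N) :=
    (hA.mul_right √N).of_nonneg_of_le (fun j => by positivity)
      fun j => by gcongr; exact min_le_right _ _
  rw [sub_apply, smul_apply, one_apply_eq_self, ← hsum.tsum_eq]
  refine tsum_of_norm_bounded (hbound.hasSum.mul_left (2 * ‖v‖)) fun j => ?_
  have hpiece : ∀ a b : ℤ, a - b = j ∨ b - a = j →
      ‖lp.indicator (Ico a (a + N) \ Ico b (b + N)) fun n => η ^ (j - n) • A j v‖ ≤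
        √(min (j.natAbs : ℝ) N) * (‖A j‖ * ‖v‖) := by
    intro a b hab
    refine (lp.norm_indicator_le (r := ‖A j‖ * ‖v‖) fun n _ => ?_).trans ?_
    · exact norm_zpow_smul_apply_le hη _ (A j) v
    · have hcard := card_Ico_sdiff_Ico_le a b N
      have : (a - b).natAbs = j.natAbs := by rcases hab with h | h <;> omega
      gcongr
      exact_mod_cast this ▸ hcard
  rw [lp.indicator_sub_indicator]
  calc _ ≤ _ := norm_sub_le _ _
    _ ≤ √(min (j.natAbs : ℝ) N) * (‖A j‖ * ‖v‖) + √(min (j.natAbs : ℝ) N) * (‖A j‖ * ‖v‖) :=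
        add_le_add (by simpa using hpiece j 0 (by simp)) (by simpa using hpiece 0 j (by simp))
    _ = _ := by ring

theorem mem_spectrum_of_symbol_apply_eq_smul (hA : Summable (‖A ·‖))
    (hT : ∀ φ n, T φ n = ∑' j, A j (φ (n - j))) (hη : ‖η‖ = 1) (hv0 : v ≠ 0)
    (hv : (∑' j, η ^ j • A j) v = z • v) : z ∈ spectrum ℂ T := by
  have hsymbol : ∑' j, η ^ j • A j v = z • v := by
    have hS : Summable fun j => η ^ j • A j :=
      hA.of_norm_bounded fun j => (norm_zpow_smul_of_norm_eq_one hη j (A j)).le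
    rw [← hv]
    exact (hS.hasSum.mapL (ContinuousLinearMap.apply ℂ V v)).tsum_eq
  rw [mem_spectrum_iff_not_isUnit_sub_smul_one]
  set S : ℕ → ℝ := fun N => ∑' j : ℤ, ‖A j‖ * √(min (j.natAbs : ℝ) N)
  refine not_isUnit_of_norm_apply_le (x := truncatedPlaneWave η v) (δ := fun N => 2 * (S N / √N))
    (by simpa only [mul_zero] using (tendsto_tsum_mul_sqrt_min_div_sqrt hA (fun _ => norm_nonneg _)
      Int.natAbs).const_mul 2)
    ((eventually_gt_atTop 0).mono fun N hN => ⟨?_, ?_⟩)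
  · rw [← norm_pos_iff, norm_truncatedPlaneWave hη]
    exact mul_pos (by positivity) (norm_pos_iff.mpr hv0)
  · calc _ ≤ 2 * ‖v‖ * S N := norm_sub_smul_one_apply_truncatedPlaneWave_le hA hT hη hsymbol N
      _ = 2 * (S N / √N) * (√N * ‖v‖) := by field_simp
      _ = _ := by rw [norm_truncatedPlaneWave hη]

end Convolution

theorem symbol_invertible_of_bulk_invertible
    {V : Type} [NormedAddCommGroup V] [InnerProductSpace ℂ V] [FiniteDimensional ℂ V]
    (A : ℤ → 𝕋 → (V →L[ℂ] V)) (hAcont : ∀ j, Continuous (A j))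
    (hAsum : Summable fun j : ℤ => ⨆ t : 𝕋, ‖A j t‖)
    (H : 𝕋 → (L2 V →L[ℂ] L2 V))
    (hH : ∀ (t : 𝕋) (φ : L2 V) (n : ℤ), H t φ n = ∑' j : ℤ, A j t (φ (n - j))) :
    (∀ (t : 𝕋) (z : ℂ), IsUnit (H t - z • (1 : L2 V →L[ℂ] L2 V)) →
      ∀ η : 𝕋, IsUnit ((∑' j : ℤ, ((η : ℂ) ^ j) • A j t) - z • (1 : V →L[ℂ] V))) ∧
    (∀ (η : 𝕋) (t : 𝕋),
      spectrum ℂ (∑' j : ℤ, ((η : ℂ) ^ j) • A j t) ⊆ spectrum ℂ (H t)) := by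
  have : CompleteSpace V := FiniteDimensional.complete ℂ V
  have hA (t : 𝕋) : Summable fun j => ‖A j t‖ :=
    hAsum.of_nonneg_of_le (fun j => norm_nonneg _)
      fun j => le_ciSup (isCompact_range (hAcont j).norm).bddAbove t
  have hspectrum (η t : 𝕋) :
      spectrum ℂ (∑' j : ℤ, ((η : ℂ) ^ j) • A j t) ⊆ spectrum ℂ (H t) := by
    intro z hz
    rw [ContinuousLinearMap.spectrum_eq, ← Module.End.hasEigenvalue_iff_mem_spectrum] at hz
    obtain ⟨v, hv⟩ := hz.exists_hasEigenvector
    exact mem_spectrum_of_symbol_apply_eq_smul (hA t) (hH t) (norm_eq_of_mem_sphere η) hv.2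
      hv.apply_eq_smul
  refine ⟨fun t z hz η => not_not.mp fun h => ?_, hspectrum⟩
  exact mem_spectrum_iff_not_isUnit_sub_smul_one.mp
    (hspectrum η t (mem_spectrum_iff_not_isUnit_sub_smul_one.mpr h)) hz
end
end

section
/- Suppose k ≥ 1 and A_j = 0 for all |j| > k. Let t ∈ 𝕋 and z ∈ ℂ be such that T := H(t) − z·1 is invertible as a bounded operator on ℓ²(ℤ;V). Then (P_{≥k} T P_{≥0})(P_{≥0} T^{−1} P_{≥k}) ψ = ψ for every ψ ∈ ℓ²(ℤ_{≥k};V); in particular the compression P_{≥k}(H(t) − z)P_{≥0} : ℓ²(ℤ_{≥0};V) → ℓ²(ℤ_{≥k};V) is surjective. -/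
/-!
A banded operator `S` with `A_j = 0` for `|j| > k` has propagation at most `k`: the entry
`(S φ)_n` only sees `φ_m` for `|n - m| ≤ k`. Hence, for `n ≥ k`, `(S φ)_n` does not see the
entries of `φ` in negative degrees, i.e. `P≥k S P≥0 = P≥k S`. With `T = H(t) - z` this gives
`P≥k T P≥0 T⁻¹ P≥k = P≥k T T⁻¹ P≥k = P≥k`.
-/

open scoped ENNReal

noncomputable section

local notation "𝕋" => Metric.sphere (0 : ℂ) 1

section Propagation

variable {𝕜 : Type*} [NormedField 𝕜] {V : Type*} [NormedAddCommGroup V] [NormedSpace 𝕜 V]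
  {p : ℝ≥0∞} [Fact (1 ≤ p)]

def HasPropagationLE (S : lp (fun _ : ℤ => V) p →L[𝕜] lp (fun _ : ℤ => V) p) (k : ℤ) : Prop :=
  ∀ (φ : lp (fun _ : ℤ => V) p) (n : ℤ), (∀ m, |n - m| ≤ k → φ m = 0) → S φ n = 0

theorem hasPropagationLE_of_convolution (A : ℤ → V →L[𝕜] V) {k : ℤ}
    (hA : ∀ j, k < |j| → A j = 0) (S : lp (fun _ : ℤ => V) p →L[𝕜] lp (fun _ : ℤ => V) p)
    (hS : ∀ φ n, S φ n = ∑' j, A j (φ (n - j))) : HasPropagationLE S k := by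
  intro φ n hφ
  rw [hS, ← tsum_zero]
  refine tsum_congr fun j => ?_
  rcases le_or_gt |j| k with hj | hj
  · rw [hφ (n - j) (by simpa using hj), map_zero]
  · rw [hA j hj, zero_apply]

theorem hasPropagationLE_smul_one (c : 𝕜) {k : ℤ} (hk : 0 ≤ k) :
    HasPropagationLE (c • 1 : lp (fun _ : ℤ => V) p →L[𝕜] lp (fun _ : ℤ => V) p) k := by
  intro φ n hφ
  simp [hφ n (by simpa using hk)]

namespace HasPropagationLE

variable {S R : lp (fun _ : ℤ => V) p →L[𝕜] lp (fun _ : ℤ => V) p} {k : ℤ}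

theorem sub (hS : HasPropagationLE S k) (hR : HasPropagationLE R k) :
    HasPropagationLE (S - R) k := fun φ n hφ => by
  simp [hS φ n hφ, hR φ n hφ]

theorem apply_eq_of_eqOn (hS : HasPropagationLE S k) {φ ψ : lp (fun _ : ℤ => V) p} {n : ℤ}
    (h : ∀ m, |n - m| ≤ k → φ m = ψ m) : S φ n = S ψ n := by
  have h0 := hS (φ - ψ) n fun m hm => by simp [h m hm]
  rwa [map_sub, lp.coeFn_sub, Pi.sub_apply, sub_eq_zero] at h0

theorem proj_apply_proj {P : ℤ → lp (fun _ : ℤ => V) p →L[𝕜] lp (fun _ : ℤ => V) p}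
    (hP : ∀ m φ n, P m φ n = if m ≤ n then φ n else 0) (hS : HasPropagationLE S k)
    {a b : ℤ} (hab : a + k ≤ b) (φ : lp (fun _ : ℤ => V) p) :
    P b (S (P a φ)) = P b (S φ) := by
  ext n
  rw [hP, hP]
  split_ifs with hn
  · refine hS.apply_eq_of_eqOn fun m hm => ?_
    rw [hP, if_pos (by linarith [(abs_le.mp hm).2])]
  · rfl

end HasPropagationLE

theorem proj_apply_of_forall_lt_eq_zero
    {P : ℤ → lp (fun _ : ℤ => V) p →L[𝕜] lp (fun _ : ℤ => V) p}
    (hP : ∀ m φ n, P m φ n = if m ≤ n then φ n else 0) {m : ℤ} {ψ : lp (fun _ : ℤ => V) p}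
    (hψ : ∀ n < m, ψ n = 0) : P m ψ = ψ := by
  ext n
  rw [hP]
  split_ifs with hn
  · rfl
  · exact (hψ n (not_le.mp hn)).symm

end Propagation

theorem compression_right_inverse_and_surjective_general
    {V : Type} [NormedAddCommGroup V] [InnerProductSpace ℂ V]
    (A : ℤ → 𝕋 → (V →L[ℂ] V))
    (H : 𝕋 → (L2 V →L[ℂ] L2 V))
    (hH : ∀ (t : 𝕋) (φ : L2 V) (n : ℤ), H t φ n = ∑' j : ℤ, A j t (φ (n - j)))
    (P : ℤ → (L2 V →L[ℂ] L2 V))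
    (hP : ∀ (m : ℤ) (φ : L2 V) (n : ℤ), P m φ n = if m ≤ n then φ n else 0)
    (k : ℤ) (hk : 1 ≤ k) (hfin : ∀ j : ℤ, k < |j| → A j = 0)
    (t : 𝕋) (z : ℂ) (T' : L2 V →L[ℂ] L2 V)
    (hT1 : (H t - z • 1).comp T' = 1) :
    (∀ ψ : L2 V, (∀ n : ℤ, n < k → ψ n = 0) →
      ((P k).comp ((H t - z • 1).comp (P 0)))
        (((P 0).comp (T'.comp (P k))) ψ) = ψ) ∧
    (∀ ψ : L2 V, (∀ n : ℤ, n < k → ψ n = 0) →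
      ∃ φ : L2 V, (∀ n : ℤ, n < 0 → φ n = 0) ∧
        ((P k).comp ((H t - z • 1).comp (P 0))) φ = ψ) := by
  have hT : HasPropagationLE (H t - z • 1) k :=
    (hasPropagationLE_of_convolution (A · t) (fun j hj => by rw [hfin j hj]; rfl) (H t) (hH t)).sub
      (hasPropagationLE_smul_one z (by omega))
  have right_inv : ∀ ψ : L2 V, (∀ n : ℤ, n < k → ψ n = 0) →
      ((P k).comp ((H t - z • 1).comp (P 0))) (((P 0).comp (T'.comp (P k))) ψ) = ψ := by
    intro ψ hψ
    have hTT' : ∀ φ, (H t - z • 1) (T' φ) = φ := fun φ => by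
      simpa using congrArg (· φ) hT1
    simp only [ContinuousLinearMap.comp_apply]
    rw [hT.proj_apply_proj hP (by simp), hT.proj_apply_proj hP (by simp), hTT',
      proj_apply_of_forall_lt_eq_zero hP hψ, proj_apply_of_forall_lt_eq_zero hP hψ]
  refine ⟨right_inv, fun ψ hψ => ⟨_, fun n hn => ?_, right_inv ψ hψ⟩⟩
  simp [hP, not_le.mpr hn]

theorem compression_right_inverse_and_surjective
    {V : Type} [NormedAddCommGroup V] [InnerProductSpace ℂ V] [FiniteDimensional ℂ V]
    (A : ℤ → 𝕋 → (V →L[ℂ] V)) (hAcont : ∀ j, Continuous (A j))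
    (hAsum : Summable fun j : ℤ => ⨆ t : 𝕋, ‖A j t‖)
    (H : 𝕋 → (L2 V →L[ℂ] L2 V))
    (hH : ∀ (t : 𝕋) (φ : L2 V) (n : ℤ), H t φ n = ∑' j : ℤ, A j t (φ (n - j)))
    (P : ℤ → (L2 V →L[ℂ] L2 V))
    (hP : ∀ (m : ℤ) (φ : L2 V) (n : ℤ), P m φ n = if m ≤ n then φ n else 0)
    (k : ℤ) (hk : 1 ≤ k) (hfin : ∀ j : ℤ, k < |j| → A j = 0)
    (t : 𝕋) (z : ℂ) (T' : L2 V →L[ℂ] L2 V)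
    (hT1 : (H t - z • 1).comp T' = 1) (hT2 : T'.comp (H t - z • 1) = 1) :
    (∀ ψ : L2 V, (∀ n : ℤ, n < k → ψ n = 0) →
      ((P k).comp ((H t - z • 1).comp (P 0)))
        (((P 0).comp (T'.comp (P k))) ψ) = ψ) ∧
    (∀ ψ : L2 V, (∀ n : ℤ, n < k → ψ n = 0) →
      ∃ φ : L2 V, (∀ n : ℤ, n < 0 → φ n = 0) ∧
        ((P k).comp ((H t - z • 1).comp (P 0))) φ = ψ) :=
  compression_right_inverse_and_surjective_general A H hH P hP k hk hfin t z T' hT1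
end
end

section
/- Assume H(t) is self-adjoint for every t ∈ 𝕋. Let k ≥ 1 be an integer, t ∈ 𝕋 and z ∈ ℂ such that H(t) − z·1 is invertible on ℓ²(ℤ;V), the compression P_{≥k}(H(t) − z)P_{≥0} : ℓ²(ℤ_{≥0};V) → ℓ²(ℤ_{≥k};V) is surjective, and moreover ker(H^#(t) − z) = {0}. Then the linear map g_{z,t} : (E_GP)_{z,t} → V^{⊕k}, φ ↦ (H^#(t) − z)φ, is a linear isomorphism. -/
/-!
Extend the edge operator `p (H - z) p`, where `p = P 0`, by the identity on `ker p` to an operator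
`T` on all of `ℓ²(ℤ; V)`. The absence of edge states makes `T` injective. Its adjoint is the
same construction for `z̄`; since the compression `p H p` is self-adjoint, `z̄` can only be one of
its eigenvalues if it equals `z`, so `T*` is injective too. Surjectivity of the compression onto
degrees `≥ k` says that `range T` together with the finite-dimensional space `V^{⊕k}` spans
everything. A range with a finite-dimensional complement is closed (open mapping theorem), and
`ker T* = 0` makes it dense, so `T` is onto. Finally `T φ = ψ` with `p ψ = ψ` forces `p φ = φ`.
-/

noncomputable section

local notation "𝕋" => Metric.sphere (0 : ℂ) 1

open scoped ENNReal

namespace ContinuousLinearMap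

theorem isClosed_range_of_isCompl_of_finiteDimensional
    {𝕜 E F : Type*} [NontriviallyNormedField 𝕜] [CompleteSpace 𝕜]
    [NormedAddCommGroup E] [NormedSpace 𝕜 E] [CompleteSpace E]
    [NormedAddCommGroup F] [NormedSpace 𝕜 F] [CompleteSpace F]
    {T : E →L[𝕜] F} (hT : Function.Injective T) {W : Submodule 𝕜 F} [FiniteDimensional 𝕜 W]
    (hW : IsCompl T.range W) : IsClosed (T.range : Set F) := by
  have : CompleteSpace W := FiniteDimensional.complete 𝕜 W
  let Φ : E × W →L[𝕜] F := T.coprod W.subtypeL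
  have hker : Φ.ker = ⊥ := by
    refine LinearMap.ker_eq_bot'.2 fun ⟨x, w⟩ h => ?_
    have hTx : T x = -w := eq_neg_of_add_eq_zero_left h
    have hTx0 : T x = 0 :=
      Submodule.disjoint_def.1 hW.disjoint _ ⟨x, rfl⟩ (hTx ▸ W.neg_mem w.2)
    have hw : w = 0 := by simpa [hTx0] using hTx
    simp [hT (hTx0.trans (map_zero T).symm), hw]
  have hrange : Φ.range = ⊤ := by
    rw [eq_top_iff, ← hW.sup_eq_top, sup_le_iff]
    constructor
    · rintro _ ⟨x, rfl⟩
      exact ⟨(x, 0), by simp [Φ]⟩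
    · intro w hw
      exact ⟨(0, ⟨w, hw⟩), by simp [Φ]⟩
  let e := ContinuousLinearEquiv.ofBijective Φ hker hrange
  have hTe : ⇑T = e ∘ fun x => (x, 0) := by
    funext x
    simp [e, Φ]
  have hinl : Set.range (fun x : E => (x, (0 : W))) = {q | q.2 = 0} := by
    ext ⟨x, w⟩
    simp [eq_comm]
  rw [LinearMap.coe_range, coe_coe, hTe, Set.range_comp]
  exact e.toHomeomorph.isClosedMap _ (hinl ▸ isClosed_eq continuous_snd continuous_const)

theorem surjective_of_injective_adjoint_of_sup_finiteDimensional
    {𝕜 E F : Type*} [RCLike 𝕜] [NormedAddCommGroup E] [InnerProductSpace 𝕜 E] [CompleteSpace E]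
    [NormedAddCommGroup F] [InnerProductSpace 𝕜 F] [CompleteSpace F]
    {T : E →L[𝕜] F} (hT : Function.Injective T) (hT' : Function.Injective (adjoint T))
    {W : Submodule 𝕜 F} [FiniteDimensional 𝕜 W] (hW : T.range ⊔ W = ⊤) :
    Function.Surjective T := by
  obtain ⟨W', hW'W, hcompl⟩ := (codisjoint_iff.2 hW).symm.exists_isCompl
  have : FiniteDimensional 𝕜 W' := Submodule.finiteDimensional_of_le hW'W
  have hclosed := isClosed_range_of_isCompl_of_finiteDimensional hT hcompl.symm
  rw [← coe_coe, ← LinearMap.range_eq_top, ← hclosed.submodule_topologicalClosure_eq,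
    Submodule.topologicalClosure_eq_top_iff, orthogonal_range, LinearMap.ker_eq_bot]
  exact hT'

section CompressionExtension

variable {R M : Type*} [Ring R] [TopologicalSpace M] [AddCommGroup M] [Module R M]
  [IsTopologicalAddGroup M] {p : M →L[R] M}

def compressionExtension (p A : M →L[R] M) : M →L[R] M := p * A * p + (1 - p)

theorem compressionExtension_apply_of_apply_eq (A : M →L[R] M) {x : M} (hx : p x = x) :
    compressionExtension p A x = p (A x) := by
  simp [compressionExtension, hx]

theorem apply_eq_of_compressionExtension_apply_eq (hp : IsIdempotentElem p) (A : M →L[R] M)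
    {x y : M} (hxy : compressionExtension p A x = y) (hy : p y = y) : p x = x := by
  have hcompl : (1 - p) * compressionExtension p A = 1 - p := by
    simp only [compressionExtension, mul_add, ← mul_assoc, sub_mul, one_mul, hp.eq, sub_self,
      zero_mul, zero_add, mul_sub, mul_one, sub_zero]
  have hx := congr($hcompl x)
  simp only [mul_apply_eq_comp, hxy, sub_apply, one_apply_eq_self, hy, sub_self] at hx
  exact (sub_eq_zero.1 hx.symm).symm

theorem compressionExtension_injective (hp : IsIdempotentElem p) {A : M →L[R] M}
    (hA : ∀ x, p x = x → p (A x) = 0 → x = 0) :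
    Function.Injective (compressionExtension p A) := by
  refine (injective_iff_map_eq_zero _).2 fun x hx => ?_
  have hpx := apply_eq_of_compressionExtension_apply_eq hp A hx (map_zero p)
  exact hA x hpx (compressionExtension_apply_of_apply_eq A hpx ▸ hx)

theorem range_compressionExtension_sup_eq_top (hp : IsIdempotentElem p) {A : M →L[R] M}
    {W : Submodule R M} (hW : p.range ≤ (p * A * p).range ⊔ W) :
    (compressionExtension p A).range ⊔ W = ⊤ := by
  have hpp (x : M) : p (p x) = p x := congr($hp.eq x)
  have hcompr : (p * A * p).range ≤ (compressionExtension p A).range := by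
    rintro _ ⟨x, rfl⟩
    exact ⟨p x, compressionExtension_apply_of_apply_eq A (hpp x) |>.trans (by simp)⟩
  have hcompl (y : M) : y - p y ∈ (compressionExtension p A).range :=
    ⟨y - p y, by simp [compressionExtension, hpp]⟩
  refine eq_top_iff.2 fun y _ => ?_
  rw [← sub_add_cancel y (p y)]
  exact add_mem (Submodule.mem_sup_left (hcompl y)) (sup_le_sup_right hcompr W (hW ⟨y, rfl⟩))

end CompressionExtension

variable {𝕜 E : Type*} [RCLike 𝕜] [NormedAddCommGroup E] [InnerProductSpace 𝕜 E]
  [CompleteSpace E] {p : E →L[𝕜] E}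

theorem adjoint_compressionExtension (hp : IsSelfAdjoint p) (A : E →L[𝕜] E) :
    adjoint (compressionExtension p A) = compressionExtension p (adjoint A) := by
  simp only [← star_eq_adjoint, compressionExtension, star_add, star_sub, star_mul, star_one,
    hp.star_eq, mul_assoc]

theorem eq_zero_of_compression_apply_eq_conj_smul (hp : IsSelfAdjoint p) {H : E →L[𝕜] E}
    (hH : IsSelfAdjoint H) {z : 𝕜} (hz : ∀ x, p x = x → p (H x) = z • x → x = 0) {x : E}
    (hx : p x = x) (hHx : p (H x) = starRingEnd 𝕜 z • x) : x = 0 := by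
  by_contra hne
  have hsymm : ((p * H * p : E →L[𝕜] E) : E →ₗ[𝕜] E).IsSymmetric :=
    isSelfAdjoint_iff_isSymmetric.1 (hH.conjugate_self hp)
  have hreal := hsymm.conj_eigenvalue_eq_self <|
    Module.End.hasEigenvalue_of_hasEigenvector (μ := starRingEnd 𝕜 z)
      ⟨Module.End.mem_eigenspace_iff.2 (by simp [hx, hHx]), hne⟩
  rw [RCLike.conj_conj] at hreal
  exact hne (hz x hx (hreal ▸ hHx))

theorem exists_compression_sub_smul_eq (hp : IsStarProjection p) {H : E →L[𝕜] E}
    (hH : IsSelfAdjoint H) {z : 𝕜} (hz : ∀ x, p x = x → p (H x) = z • x → x = 0)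
    {W : Submodule 𝕜 E} [FiniteDimensional 𝕜 W] (hW : p.range ≤ (p * (H - z • 1) * p).range ⊔ W)
    {y : E} (hy : p y = y) : ∃ x, p x = x ∧ p (H x) - z • x = y := by
  have hinj (w : 𝕜) (hw : ∀ x, p x = x → p (H x) = w • x → x = 0) :
      Function.Injective (compressionExtension p (H - w • 1)) :=
    compressionExtension_injective hp.isIdempotentElem fun x hx h =>
      hw x hx (by simpa [hx, sub_eq_zero] using h)
  have hadj : adjoint (compressionExtension p (H - z • 1)) =
      compressionExtension p (H - starRingEnd 𝕜 z • 1) := by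
    rw [adjoint_compressionExtension hp.isSelfAdjoint, ← star_eq_adjoint, star_sub, star_smul,
      hH.star_eq, star_one, RCLike.star_def]
  obtain ⟨x, hx⟩ := surjective_of_injective_adjoint_of_sup_finiteDimensional (hinj z hz)
    (hadj ▸ hinj _ fun x => eq_zero_of_compression_apply_eq_conj_smul hp.isSelfAdjoint hH hz)
    (range_compressionExtension_sup_eq_top hp.isIdempotentElem hW) y
  have hpx := apply_eq_of_compressionExtension_apply_eq hp.isIdempotentElem _ hx hy
  refine ⟨x, hpx, ?_⟩
  rw [← hx, compressionExtension_apply_of_apply_eq _ hpx]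
  simp [hpx]

end ContinuousLinearMap

namespace lp

section Apply

variable {ι 𝕜 : Type*} {E : ι → Type*} [∀ i, NormedAddCommGroup (E i)] {p : ℝ≥0∞}

@[simp]
theorem sub_apply (f g : lp E p) (i : ι) : (f - g) i = f i - g i := rfl

@[simp]
theorem smul_apply [NormedRing 𝕜] [∀ i, Module 𝕜 (E i)] [∀ i, IsBoundedSMul 𝕜 (E i)]
    [Fact (1 ≤ p)] (c : 𝕜) (f : lp E p) (i : ι) : (c • f) i = c • f i := rfl

end Apply

section Indicator

variable {𝕜 ι V : Type*} [RCLike 𝕜] [NormedAddCommGroup V] [InnerProductSpace 𝕜 V]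
  {S : ι → Prop} [DecidablePred S] {Q : lp (fun _ : ι => V) 2 →L[𝕜] lp (fun _ : ι => V) 2}

theorem apply_eq_self_iff_of_apply_eq_ite (hQ : ∀ f i, Q f i = if S i then f i else 0)
    (f : lp (fun _ : ι => V) 2) : Q f = f ↔ ∀ i, ¬S i → f i = 0 := by
  refine ⟨fun h i hi => ?_, fun h => lp.ext <| funext fun i => ?_⟩
  · rw [← h, hQ, if_neg hi]
  · rw [hQ]
    split_ifs with hi
    · rfl
    · exact (h i hi).symm

theorem isStarProjection_of_apply_eq_ite [CompleteSpace V]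
    (hQ : ∀ f i, Q f i = if S i then f i else 0) : IsStarProjection Q := by
  refine ⟨ContinuousLinearMap.ext fun f => lp.ext <| funext fun i => ?_,
    ContinuousLinearMap.isSelfAdjoint_iff_isSymmetric.2 fun f g => ?_⟩
  · simp only [mul_apply_eq_comp, hQ]
    split_ifs <;> rfl
  · simp only [ContinuousLinearMap.coe_coe, lp.inner_eq_tsum, hQ]
    congr 1 with i
    split_ifs <;> simp

end Indicator

end lp

section lpSupportedIn

variable (𝕜 V : Type*) {ι : Type*} [NontriviallyNormedField 𝕜] [NormedAddCommGroup V]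
  [NormedSpace 𝕜 V] (p : ℝ≥0∞) [Fact (1 ≤ p)] (s : Set ι)

def lpSupportedIn : Submodule 𝕜 (lp (fun _ : ι => V) p) where
  carrier := {f | ∀ i ∉ s, f i = 0}
  add_mem' hf hg i hi := by simp [hf i hi, hg i hi]
  zero_mem' _ _ := rfl
  smul_mem' c f hf i hi := by simp [hf i hi]

instance [Finite s] [FiniteDimensional 𝕜 V] : FiniteDimensional 𝕜 (lpSupportedIn 𝕜 V p s) := by
  refine .of_injective (LinearMap.pi fun i : s =>
    (lp.evalₗ (𝕜 := 𝕜) (fun _ : ι => V) p (i : ι)).comp (lpSupportedIn 𝕜 V p s).subtype) ?_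
  refine (injective_iff_map_eq_zero _).2 fun f hf => Subtype.ext <| lp.ext <| funext fun i => ?_
  by_cases hi : i ∈ s
  · exact congr_fun hf ⟨i, hi⟩
  · exact f.2 i hi

end lpSupportedIn

section HalfLineProjection

variable {V : Type} [NormedAddCommGroup V] [NormedSpace ℂ V] {P : ℤ → (L2 V →L[ℂ] L2 V)}

theorem range_le_range_compression_sup_lpSupportedIn
    (hP : ∀ (m : ℤ) (φ : L2 V) (n : ℤ), P m φ n = if m ≤ n then φ n else 0) {k : ℤ}
    {A : L2 V →L[ℂ] L2 V} (hA : ∀ ψ : L2 V, (∀ n < k, ψ n = 0) → ∃ φ, P k (A (P 0 φ)) = ψ) :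
    (P 0).range ≤ (P 0 * A * P 0).range ⊔ lpSupportedIn ℂ V 2 (Set.Ico 0 k) := by
  rintro _ ⟨y, rfl⟩
  obtain ⟨φ, hφ⟩ := hA (P k (P 0 y)) fun n hn => by simp [hP, not_le.2 hn]
  change P 0 y ∈ _
  rw [← add_sub_cancel (P 0 (A (P 0 φ))) (P 0 y)]
  refine Submodule.add_mem_sup ⟨φ, rfl⟩ fun n hn => ?_
  rw [Set.mem_Ico, not_and_or, not_le, not_lt] at hn
  by_cases h0 : 0 ≤ n
  · have hkn : k ≤ n := hn.resolve_left (not_lt.2 h0)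
    have hφn := congr($hφ n)
    simp only [hP, hkn, h0, if_true] at hφn
    simp [hP, h0, hφn]
  · simp [hP, h0]

theorem compression_sub_smul_apply
    (hP : ∀ (m : ℤ) (φ : L2 V) (n : ℤ), P m φ n = if m ≤ n then φ n else 0)
    (A : L2 V →L[ℂ] L2 V) (z : ℂ) {φ : L2 V} (hφ : ∀ n < 0, φ n = 0) (n : ℤ) :
    (P 0 (A φ) - z • φ) n = if 0 ≤ n then ((A - z • 1) φ) n else 0 := by
  split_ifs with hn
  · simp [hP, hn]
  · simp [hP, hn, hφ n (not_le.1 hn)]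

end HalfLineProjection

theorem grafPorta_g_isomorphism_of_no_edge_states_general
    {V : Type} [NormedAddCommGroup V] [InnerProductSpace ℂ V] [FiniteDimensional ℂ V]
    (H : 𝕋 → (L2 V →L[ℂ] L2 V))
    (hSA : ∀ t : 𝕋, IsSelfAdjoint (H t))
    (P : ℤ → (L2 V →L[ℂ] L2 V))
    (hP : ∀ (m : ℤ) (φ : L2 V) (n : ℤ), P m φ n = if m ≤ n then φ n else 0)
    (k : ℤ) (hk : 1 ≤ k) (t : 𝕋) (z : ℂ)
    (hsurj : ∀ ψ : L2 V, (∀ n : ℤ, n < k → ψ n = 0) →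
      ∃ φ : L2 V, (∀ n : ℤ, n < 0 → φ n = 0) ∧
        ((P k).comp ((H t - z • 1).comp (P 0))) φ = ψ)
    (hker : ∀ φ : L2 V, (∀ n : ℤ, n < 0 → φ n = 0) →
      ((P 0).comp ((H t).comp (P 0))) φ = z • φ → φ = 0) :
    Set.BijOn (fun φ : L2 V => ((P 0).comp ((H t).comp (P 0))) φ - z • φ)
      {φ : L2 V | (∀ n : ℤ, n < 0 → φ n = 0) ∧
        ∀ n : ℤ, k ≤ n → ((H t - z • 1) φ) n = 0}
      {ψ : L2 V | ∀ n : ℤ, (n < 0 ∨ k ≤ n) → ψ n = 0} := by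
  have : CompleteSpace V := FiniteDimensional.complete ℂ V
  have hfix (φ : L2 V) : P 0 φ = φ ↔ ∀ n < 0, φ n = 0 := by
    simpa using lp.apply_eq_self_iff_of_apply_eq_ite (hP 0) φ
  refine ⟨fun φ ⟨hφ, hHφ⟩ n hn => ?_, fun φ₁ h₁ φ₂ h₂ heq => ?_, fun ψ hψ => ?_⟩
  · simp only [ContinuousLinearMap.comp_apply, (hfix φ).2 hφ, compression_sub_smul_apply hP _ _ hφ]
    split_ifs with h0
    · exact hHφ n (hn.resolve_left (not_lt.2 h0))
    · rfl
  · refine sub_eq_zero.1 (hker _ (fun n hn => ?_) ?_)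
    · simp [h₁.1 n hn, h₂.1 n hn]
    · simpa [sub_eq_sub_iff_sub_eq_sub, smul_sub] using heq
  · obtain ⟨φ, hφ, hφψ⟩ := ContinuousLinearMap.exists_compression_sub_smul_eq
      (lp.isStarProjection_of_apply_eq_ite (hP 0)) (hSA t)
      (fun x hx hHx => hker x ((hfix x).1 hx) (by simpa [hx] using hHx))
      (range_le_range_compression_sup_lpSupportedIn hP fun ψ hψ => (hsurj ψ hψ).imp fun _ h => h.2)
      ((hfix ψ).2 fun n hn => hψ n (.inl hn))
    refine ⟨φ, ⟨(hfix φ).1 hφ, fun n hn => ?_⟩, by simp [hφ, hφψ]⟩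
    have hφn := compression_sub_smul_apply hP (H t) z ((hfix φ).1 hφ) n
    rw [if_pos (by omega), hφψ] at hφn
    exact hφn ▸ hψ n (.inr hn)

theorem grafPorta_g_isomorphism_of_no_edge_states
    {V : Type} [NormedAddCommGroup V] [InnerProductSpace ℂ V] [FiniteDimensional ℂ V]
    (A : ℤ → 𝕋 → (V →L[ℂ] V)) (hAcont : ∀ j, Continuous (A j))
    (hAsum : Summable fun j : ℤ => ⨆ t : 𝕋, ‖A j t‖)
    (H : 𝕋 → (L2 V →L[ℂ] L2 V))
    (hH : ∀ (t : 𝕋) (φ : L2 V) (n : ℤ), H t φ n = ∑' j : ℤ, A j t (φ (n - j)))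
    (hSA : ∀ t : 𝕋, IsSelfAdjoint (H t))
    (P : ℤ → (L2 V →L[ℂ] L2 V))
    (hP : ∀ (m : ℤ) (φ : L2 V) (n : ℤ), P m φ n = if m ≤ n then φ n else 0)
    (k : ℤ) (hk : 1 ≤ k) (t : 𝕋) (z : ℂ)
    (hz : IsUnit (H t - z • (1 : L2 V →L[ℂ] L2 V)))
    (hsurj : ∀ ψ : L2 V, (∀ n : ℤ, n < k → ψ n = 0) →
      ∃ φ : L2 V, (∀ n : ℤ, n < 0 → φ n = 0) ∧
        ((P k).comp ((H t - z • 1).comp (P 0))) φ = ψ)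
    (hker : ∀ φ : L2 V, (∀ n : ℤ, n < 0 → φ n = 0) →
      ((P 0).comp ((H t).comp (P 0))) φ = z • φ → φ = 0) :
    Set.BijOn (fun φ : L2 V => ((P 0).comp ((H t).comp (P 0))) φ - z • φ)
      {φ : L2 V | (∀ n : ℤ, n < 0 → φ n = 0) ∧
        ∀ n : ℤ, k ≤ n → ((H t - z • 1) φ) n = 0}
      {ψ : L2 V | ∀ n : ℤ, (n < 0 ∨ k ≤ n) → ψ n = 0} :=
  grafPorta_g_isomorphism_of_no_edge_states_general H hSA P hP k hk t z hsurj hker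
end
end

section
/- Let V be a finite-dimensional complex inner product space, X a topological space, A : X → End_ℂ(V) a continuous map such that A(x) is self-adjoint for every x ∈ X, and μ ∈ ℝ such that μ is not an eigenvalue of A(x) for any x ∈ X. For each x let P(x) ∈ End_ℂ(V) denote the spectral projection of A(x) for the part of the spectrum lying in (−∞, μ), i.e. the orthogonal projection onto the sum of the eigenspaces of A(x) with eigenvalue < μ. Then x ↦ P(x) is continuous, each P(x) is an orthogonal projection commuting with A(x), and the function x ↦ rank P(x) is locally constant on X. -/
/-!
Write `χ` for the indicator function of `(-∞, μ)`. The functional calculus acts on an eigenvector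
of `A x` with eigenvalue `r` as multiplication by `χ r`, so `cfc χ (A x)` is a self-adjoint
idempotent with range the sum of the eigenspaces below `μ`; hence it is `P x`. Since `χ` is
continuous on `ℝ \ {μ}`, an open set containing every spectrum, continuity of the functional
calculus in the operator makes `P` continuous. The rank of `P x` is its trace, a continuous
function with values in `ℕ`, hence locally constant.
-/

open Module

namespace ContinuousLinearMap

variable {V : Type*} [NormedAddCommGroup V] [InnerProductSpace ℂ V]

theorem finite_real_spectrum [FiniteDimensional ℂ V] (T : V →L[ℂ] V) :
    (spectrum ℝ T).Finite := by
  rw [← spectrum.preimage_algebraMap ℂ, spectrum_eq]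
  exact (End.finite_spectrum _).preimage (FaithfulSMul.algebraMap_injective ℝ ℂ).injOn

theorem mem_spectrum_real_iff_hasEigenvalue [FiniteDimensional ℂ V] {T : V →L[ℂ] V} {r : ℝ} :
    r ∈ spectrum ℝ T ↔ End.HasEigenvalue (T : V →ₗ[ℂ] V) (r : ℂ) := by
  rw [End.hasEigenvalue_iff_mem_spectrum, ← spectrum_eq, ← spectrum.algebraMap_mem_iff ℂ]
  rfl

theorem cfc_apply_of_apply_eq_smul [CompleteSpace V] {T : V →L[ℂ] V} (hT : IsSelfAdjoint T)
    (hfin : (spectrum ℝ T).Finite) (g : ℝ → ℝ) {r : ℝ} {v : V} (hv : T v = (r : ℂ) • v) :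
    cfc g T v = (g r : ℂ) • v := by
  have hcont : ∀ f : ℝ → ℝ, ContinuousOn f (spectrum ℝ T) := hfin.continuousOn
  -- The difference quotient is `0` at `t = r` (division by zero), where both sides vanish.
  set h : ℝ → ℝ := fun t => (g t - g r) / (t - r)
  have hg : (fun t => g t - g r) = fun t => h t * (t - r) := by
    funext t
    rcases eq_or_ne t r with rfl | htr
    · simp
    · simp only [h]
      field_simp [sub_ne_zero.mpr htr]
  have hfactor : cfc g T - algebraMap ℝ _ (g r) = cfc h T * (T - algebraMap ℝ _ r) :=
    calc cfc g T - algebraMap ℝ _ (g r) = cfc (fun t => g t - g r) T := by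
          rw [cfc_sub g (fun _ => g r) T (hcont _) (hcont _), cfc_const (g r) T]
      _ = cfc h T * cfc (fun t => t - r) T := by
          rw [hg, cfc_mul h (fun t => t - r) T (hcont _) (hcont _)]
      _ = cfc h T * (T - algebraMap ℝ _ r) := by
          rw [cfc_sub (fun t => t) (fun _ => r) T (hcont _) (hcont _), cfc_id' ℝ T, cfc_const r T]
  have happly := congrArg (· v) hfactor
  simp only [sub_apply, mul_def, comp_apply, algebraMap_apply, hv, Complex.coe_smul, sub_self,
    map_zero, sub_eq_zero] at happly
  rw [happly, Complex.coe_smul]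

theorem cfc_indicator_Iio_eq_starProjection [FiniteDimensional ℂ V] {T : V →L[ℂ] V}
    (hT : IsSelfAdjoint T) (μ : ℝ) :
    cfc ((Set.Iio μ).indicator 1) T
      = (⨆ r : ℝ, ⨆ _ : r < μ, End.eigenspace (T : V →ₗ[ℂ] V) (r : ℂ)).starProjection := by
  set W := ⨆ r : ℝ, ⨆ _ : r < μ, End.eigenspace (T : V →ₗ[ℂ] V) (r : ℂ)
  have hidem : IsIdempotentElem (cfc ((Set.Iio μ).indicator 1) T) := by
    rw [IsIdempotentElem, ← cfc_mul _ _ T (T.finite_real_spectrum.continuousOn _)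
      (T.finite_real_spectrum.continuousOn _)]
    congr with t
    simp [Set.indicator_apply]
  refine IsStarProjection.ext ⟨hidem, cfc_predicate _ T⟩ isStarProjection_starProjection ?_
  rw [Submodule.range_starProjection]
  apply le_antisymm
  · have hsymm := hT.isSymmetric
    let e := hsymm.eigenvectorBasis rfl
    rw [LinearMap.range_eq_map, ← e.toBasis.span_eq, Submodule.map_span, Submodule.span_le]
    rintro _ ⟨_, ⟨i, rfl⟩, rfl⟩
    have hei : T (e i) = (hsymm.eigenvalues rfl i : ℂ) • e i := hsymm.apply_eigenvectorBasis rfl i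
    rw [OrthonormalBasis.coe_toBasis, coe_coe,
      cfc_apply_of_apply_eq_smul hT T.finite_real_spectrum _ hei]
    by_cases hi : hsymm.eigenvalues rfl i < μ
    · have hle : End.eigenspace (T : V →ₗ[ℂ] V) (hsymm.eigenvalues rfl i : ℂ) ≤ W :=
        le_iSup₂_of_le (f := fun r (_ : r < μ) => End.eigenspace (T : V →ₗ[ℂ] V) (r : ℂ)) _ hi
          le_rfl
      simpa [hi] using hle (End.mem_eigenspace_iff.mpr hei)
    · simp [hi]
  · refine iSup₂_le fun r hr v hv => ⟨v, ?_⟩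
    rw [End.mem_eigenspace_iff] at hv
    simp [cfc_apply_of_apply_eq_smul hT T.finite_real_spectrum _ hv, hr]

end ContinuousLinearMap

theorem continuous_cfc_indicator_Iio {X A : Type*} [TopologicalSpace X] [CStarAlgebra A]
    {a : X → A} (ha : Continuous a) (hsa : ∀ x, IsSelfAdjoint (a x)) {μ : ℝ}
    (hμ : ∀ x, μ ∉ spectrum ℝ (a x)) :
    Continuous fun x => cfc ((Set.Iio μ).indicator 1) (a x) := by
  have hχ : ContinuousOn ((Set.Iio μ).indicator (1 : ℝ → ℝ)) {μ}ᶜ := by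
    refine ContinuousOn.if ?_ continuousOn_const continuousOn_const
    rintro t ⟨htμ, ht⟩
    rw [Set.ofPred_mem_eq, frontier_Iio] at ht
    exact absurd ht htμ
  have hspec : {μ}ᶜ ∈ nhdsSet (⋃ x, spectrum ℝ (a x)) :=
    isOpen_compl_singleton.mem_nhdsSet.mpr
      (Set.iUnion_subset fun x => Set.subset_compl_singleton_iff.mpr (hμ x))
  exact Continuous.cfc_of_mem_nhdsSet _ hspec ha hsa hχ

theorem isLocallyConstant_finrank_range {𝕜 E X : Type*} [RCLike 𝕜] [NormedAddCommGroup E]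
    [NormedSpace 𝕜 E] [FiniteDimensional 𝕜 E] [TopologicalSpace X] {P : X → E →L[𝕜] E}
    (hP : Continuous P) (hidem : ∀ x, IsIdempotentElem (P x)) :
    IsLocallyConstant fun x => finrank 𝕜 (LinearMap.range (P x : E →ₗ[𝕜] E)) := by
  have htrace : ∀ x, (finrank 𝕜 (LinearMap.range (P x : E →ₗ[𝕜] E)) : ℝ)
      = RCLike.re (LinearMap.trace 𝕜 E (P x)) := fun x => by
    rw [(LinearMap.IsIdempotentElem.isProj_range _
      (ContinuousLinearMap.IsIdempotentElem.toLinearMap (hidem x))).trace, RCLike.natCast_re]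
  have hcont : Continuous fun x => (finrank 𝕜 (LinearMap.range (P x : E →ₗ[𝕜] E)) : ℝ) := by
    simp_rw [htrace]
    exact RCLike.continuous_re.comp <| ((LinearMap.trace 𝕜 E).comp
      (ContinuousLinearMap.coeLM 𝕜)).continuous_of_finiteDimensional.comp hP
  exact (IsLocallyConstant.iff_continuous _).mpr
    (Nat.isClosedEmbedding_coe_real.isEmbedding.continuous_iff.mpr hcont)

theorem spectral_projection_continuous_rank_locally_constant
    {V : Type} [NormedAddCommGroup V] [InnerProductSpace ℂ V] [FiniteDimensional ℂ V]
    {X : Type} [TopologicalSpace X]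
    (A : X → (V →L[ℂ] V)) (hA : Continuous A)
    (hsa : ∀ x, IsSelfAdjoint (A x))
    (μ : ℝ) (hμ : ∀ x, ¬ Module.End.HasEigenvalue (A x : V →ₗ[ℂ] V) (μ : ℂ))
    (W : X → Submodule ℂ V)
    (hW : ∀ x, W x = ⨆ r : ℝ, ⨆ _ : r < μ,
      Module.End.eigenspace (A x : V →ₗ[ℂ] V) (r : ℂ))
    (P : X → (V →L[ℂ] V))
    (hP : ∀ x, P x = (W x).subtypeL.comp ((W x).orthogonalProjectionOnto)) :
    Continuous P ∧
    (∀ x, IsSelfAdjoint (P x) ∧ (P x).comp (P x) = P x ∧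
      (P x).comp (A x) = (A x).comp (P x)) ∧
    IsLocallyConstant fun x => Module.finrank ℂ (LinearMap.range (P x : V →ₗ[ℂ] V)) := by
  have hproj : ∀ x, IsStarProjection (P x) := fun x => by
    rw [hP x]
    exact isStarProjection_starProjection
  have hPcfc : P = fun x => cfc ((Set.Iio μ).indicator 1) (A x) := funext fun x => by
    rw [hP x, hW x]
    exact (ContinuousLinearMap.cfc_indicator_Iio_eq_starProjection (hsa x) μ).symm
  have hcont : Continuous P := hPcfc ▸ continuous_cfc_indicator_Iio hA hsa
    fun x => ContinuousLinearMap.mem_spectrum_real_iff_hasEigenvalue.not.mpr (hμ x)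
  refine ⟨hcont, fun x => ⟨(hproj x).isSelfAdjoint, (hproj x).isIdempotentElem, ?_⟩,
    isLocallyConstant_finrank_range hcont fun x => (hproj x).isIdempotentElem⟩
  rw [hPcfc]
  exact (Commute.refl (A x)).cfc_real _
end
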